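/- arXiv:1207.3771 — 4 statements merged into one kernel-verified Lean document; each statement's English description precedes it below -/
import Mathlib

section
/- The extremal number for P_5 satisfies: ex(n, P_5) = 3n/2 if n ≡ 0 (mod 4), ex(n, P_5) = 3n/2 - 2 if n ≡ 2 (mod 4), and ex(n, P_5) = (3n-3)/2 if n ≡ 1 or 3 (mod 4), for all n ≥ 3. -/
open SimpleGraph

/-- `G` contains a copy of `H` (an injective graph homomorphism from `H` to `G`). -/
def Contains {V W : Type*} (G : SimpleGraph V) (H : SimpleGraph W) : Prop :=
  ∃ f : H →g G, Function.Injective f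

/-- The subgraph of `K_N` formed by the edges of color `i` under the edge coloring `c`. -/
def colorClass {N k : ℕ} (c : Sym2 (Fin N) → Fin k) (i : Fin k) : SimpleGraph (Fin N) :=
  SimpleGraph.fromRel (fun u v => c s(u, v) = i)

/-- Every 2-coloring of the edges of `K_N` yields a copy of `G₀` in color 0 or `G₁` in color 1. -/
def ramseyProp2 {V W : Type*} (N : ℕ) (G₀ : SimpleGraph V) (G₁ : SimpleGraph W) : Prop :=
  ∀ c : Sym2 (Fin N) → Fin 2,
    Contains (colorClass c 0) G₀ ∨ Contains (colorClass c 1) G₁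

/-- Every 3-coloring of the edges of `K_N` yields a copy of `Gᵢ` in color `i` for some `i`. -/
def ramseyProp3 {V W X : Type*} (N : ℕ) (G₀ : SimpleGraph V) (G₁ : SimpleGraph W)
    (G₂ : SimpleGraph X) : Prop :=
  ∀ c : Sym2 (Fin N) → Fin 3,
    Contains (colorClass c 0) G₀ ∨ Contains (colorClass c 1) G₁ ∨ Contains (colorClass c 2) G₂

/-- `k·K₂`: a matching consisting of `k` disjoint edges. -/
def matchingGraph (k : ℕ) : SimpleGraph (Fin k × Fin 2) :=
  SimpleGraph.fromRel (fun u v => u.1 = v.1)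

/-!
A connected P₅-free graph on `k` vertices has at most `k.choose 2` edges, and at most `k` edges
once `k ≥ 5`: around the middle edge `bc` of a P₄ `abcd` (or around any edge if there is no P₄)
the component is `N(b) ∪ N(c)`, and all of its vertices but at most three are leaves. For
such a component with `s` vertices and `t` edges, `p5Bound (n - s) + t ≤ p5Bound n`, where
`p5Bound n = 6 * (n / 4) + (n % 4).choose 2`, so peeling components off one at a time proves the
bound. It is attained by disjoint copies of `K₄` and a clique on the remaining `n % 4` vertices.
-/

theorem contains_iff_isContained {V W : Type*} {G : SimpleGraph V} {H : SimpleGraph W} :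
    Contains G H ↔ H ⊑ G :=
  ⟨fun ⟨f, hf⟩ => ⟨f.toCopy hf⟩, fun ⟨f⟩ => ⟨f.toHom, f.injective⟩⟩

def p5Bound (n : ℕ) : ℕ :=
  if n % 4 = 0 then 3 * n / 2 else if n % 4 = 2 then 3 * n / 2 - 2 else (3 * n - 3) / 2

theorem p5Bound_sub_add_le {N s t : ℕ} (hsN : s ≤ N) (ht : t ≤ s.choose 2)
    (ht5 : 5 ≤ s → t ≤ s) : p5Bound (N - s) + t ≤ p5Bound N := by
  rw [Nat.choose_two_right] at ht
  unfold p5Bound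
  by_cases hs : s ≤ 4
  · interval_cases s <;> split_ifs <;> omega
  · have := ht5 (by omega)
    split_ifs <;> omega

namespace SimpleGraph

variable {V : Type*} {G : SimpleGraph V}

theorem isContained_pathGraph_five {a b c d e : V} (hab : G.Adj a b) (hbc : G.Adj b c)
    (hcd : G.Adj c d) (hde : G.Adj d e) (hac : a ≠ c) (had : a ≠ d) (hae : a ≠ e) (hbd : b ≠ d)
    (hbe : b ≠ e) (hce : c ≠ e) : pathGraph 5 ⊑ G :=
  Walk.IsPath.isContained_pathGraph (w := .cons hab (.cons hbc (.cons hcd (.cons hde .nil))))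
    (by simp [Walk.isPath_def, hab.ne, hbc.ne, hcd.ne, hde.ne, hac, had, hae, hbd, hbe, hce])

def NeighborClosed (G : SimpleGraph V) (S : Set V) : Prop :=
  ∀ ⦃u v⦄, u ∈ S → G.Adj u v → v ∈ S

def incidentEdges (G : SimpleGraph V) (S : Set V) : Set (Sym2 V) :=
  ⋃ v ∈ S, G.incidenceSet v

theorem ncard_incidentEdges_le_ncard [Finite V] {L : Set V}
    (hL : ∀ v ∈ L, (G.neighborSet v).Subsingleton) : (G.incidentEdges L).ncard ≤ L.ncard := by
  classical
  have hfin := L.toFinite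
  calc (G.incidentEdges L).ncard = (⋃ v ∈ hfin.toFinset, G.incidenceSet v).ncard := by
        simp [incidentEdges]
    _ ≤ ∑ v ∈ hfin.toFinset, (G.incidenceSet v).ncard := Finset.set_ncard_biUnion_le _ _
    _ ≤ ∑ v ∈ hfin.toFinset, 1 := Finset.sum_le_sum fun v hv => by
        rw [← Nat.card_coe_set_eq, Nat.card_congr (G.incidenceSetEquivNeighborSet v),
          Nat.card_coe_set_eq, Set.ncard_le_one_iff_subsingleton]
        exact hL v (by simpa using hv)
    _ = L.ncard := by simp [Set.ncard_eq_toFinset_card L hfin]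

theorem ncard_incidentEdges_le [Finite V] {S K : Set V} (hS : G.NeighborClosed S)
    (hleaf : ∀ v ∈ S \ K, (G.neighborSet v).Subsingleton) :
    (G.incidentEdges S).ncard ≤ (S \ K).ncard + K.ncard.choose 2 := by
  classical
  have hK := K.toFinite
  have hsub : G.incidentEdges S ⊆
      G.incidentEdges (S \ K) ∪ ↑(hK.toFinset.offDiag.image Sym2.mk.uncurry) := by
    intro e he
    simp only [incidentEdges, Set.mem_iUnion] at he
    obtain ⟨u, hu, hue, hmem⟩ := he
    obtain ⟨w, rfl⟩ := Sym2.mem_iff_exists.mp hmem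
    have huw : G.Adj u w := hue
    by_cases huK : u ∈ K
    · by_cases hwK : w ∈ K
      · right
        simp only [Finset.coe_image, Set.mem_image, Finset.mem_coe, Finset.mem_offDiag,
          Set.Finite.mem_toFinset]
        exact ⟨(u, w), ⟨huK, hwK, huw.ne⟩, rfl⟩
      · left
        simp only [incidentEdges, Set.mem_iUnion]
        exact ⟨w, ⟨hS hu huw, hwK⟩, hue, Sym2.mem_mk_right u w⟩
    · left
      simp only [incidentEdges, Set.mem_iUnion]
      exact ⟨u, ⟨hu, huK⟩, hue, hmem⟩
  calc (G.incidentEdges S).ncard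
      ≤ (G.incidentEdges (S \ K) ∪ ↑(hK.toFinset.offDiag.image Sym2.mk.uncurry)).ncard :=
        Set.ncard_le_ncard hsub
    _ ≤ (G.incidentEdges (S \ K)).ncard + (hK.toFinset.offDiag.image Sym2.mk.uncurry).card := by
        grw [Set.ncard_union_le, Set.ncard_coe_finset]
    _ ≤ (S \ K).ncard + K.ncard.choose 2 := by
        grw [ncard_incidentEdges_le_ncard hleaf, Sym2.card_image_offDiag,
          Set.ncard_eq_toFinset_card K hK]

def IsP4 (G : SimpleGraph V) (a b c d : V) : Prop :=
  G.Adj a b ∧ G.Adj b c ∧ G.Adj c d ∧ a ≠ c ∧ a ≠ d ∧ b ≠ d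

namespace IsP4

variable {a b c d w x y z : V}

theorem reverse (h : G.IsP4 a b c d) : G.IsP4 d c b a :=
  let ⟨hab, hbc, hcd, hac, had, hbd⟩ := h
  ⟨hcd.symm, hbc.symm, hab.symm, hbd.symm, had.symm, hac.symm⟩

theorem eq_or_eq_or_eq_of_adj_left (hG : (pathGraph 5).Free G) (h : G.IsP4 a b c d)
    (haw : G.Adj a w) : w = b ∨ w = c ∨ w = d := by
  obtain ⟨hab, hbc, hcd, hac, had, hbd⟩ := h
  by_contra! hw
  exact hG (isContained_pathGraph_five haw.symm hab hbc hcd hw.1 hw.2.1 hw.2.2 hac had hbd)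

theorem eq_of_adj_of_adj_second (hG : (pathGraph 5).Free G) (h : G.IsP4 a b c d)
    (hyb : G.Adj y b) (hya : y ≠ a) (hyc : y ≠ c) (hyd : y ≠ d) (hyw : G.Adj y w) : w = b := by
  obtain ⟨hab, hbc, hcd, hac, had, hbd⟩ := h
  by_contra hwb
  by_cases hwc : w = c
  · subst hwc
    exact hG
      (isContained_pathGraph_five hab hyb.symm hyw hcd hya.symm hac had hbc.ne hbd hyd)
  by_cases hwd : w = d
  · subst hwd
    exact hG
      (isContained_pathGraph_five hab hyb.symm hyw hcd.symm hya.symm had hac hbd hbc.ne hyc)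
  · exact hG (isContained_pathGraph_five hyw.symm hyb hbc hcd hwb hwc hwd hyc hyd hbd)

theorem eq_of_adj_left_of_adj_second (hG : (pathGraph 5).Free G) (h : G.IsP4 a b c d)
    (hxb : G.Adj x b) (hxa : x ≠ a) (hxc : x ≠ c) (hxd : x ≠ d) (haw : G.Adj a w) : w = b := by
  have ⟨hab, hbc, hcd, hac, had, hbd⟩ := h
  rcases h.eq_or_eq_or_eq_of_adj_left hG haw with rfl | rfl | rfl
  · rfl
  · exact absurd (isContained_pathGraph_five hxb hab.symm haw hcd hxa hxc hxd hbc.ne hbd had) hG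
  · exact
      absurd (isContained_pathGraph_five hxb hab.symm haw hcd.symm hxa hxd hxc hbd hbc.ne hac) hG

theorem mem_neighborSet_union_of_adj (hG : (pathGraph 5).Free G) (h : G.IsP4 a b c d)
    (hy : G.Adj b y) (hyz : G.Adj y z) : z ∈ G.neighborSet b ∪ G.neighborSet c := by
  have hb : b ∈ G.neighborSet b ∪ G.neighborSet c := Or.inr h.2.1.symm
  have hc : c ∈ G.neighborSet b ∪ G.neighborSet c := Or.inl h.2.1
  have hd : d ∈ G.neighborSet b ∪ G.neighborSet c := Or.inr h.2.2.1
  by_cases hya : y = a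
  · subst hya
    rcases h.eq_or_eq_or_eq_of_adj_left hG hyz with rfl | rfl | rfl <;> assumption
  by_cases hyc : y = c
  · exact Or.inr (hyc ▸ hyz)
  by_cases hyd : y = d
  · subst hyd
    have ha : a ∈ G.neighborSet b ∪ G.neighborSet c := Or.inl h.1.symm
    rcases h.reverse.eq_or_eq_or_eq_of_adj_left hG hyz with rfl | rfl | rfl <;> assumption
  · rw [h.eq_of_adj_of_adj_second hG hy.symm hya hyc hyd hyz]
    exact hb

theorem neighborClosed (hG : (pathGraph 5).Free G) (h : G.IsP4 a b c d) :
    G.NeighborClosed (G.neighborSet b ∪ G.neighborSet c) := by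
  rintro y z (hy | hy) hyz
  · exact h.mem_neighborSet_union_of_adj hG hy hyz
  · exact Set.union_comm _ _ ▸ h.reverse.mem_neighborSet_union_of_adj hG hy hyz

theorem ncard_incidentEdges_le [Finite V] (hG : (pathGraph 5).Free G) (h : G.IsP4 a b c d)
    (hxb : G.Adj x b) (hxa : x ≠ a) (hxc : x ≠ c) (hxd : x ≠ d) :
    (G.incidentEdges (G.neighborSet b ∪ G.neighborSet c)).ncard ≤
      (G.neighborSet b ∪ G.neighborSet c).ncard := by
  have ⟨_, hbc, hcd, _, _, hbd⟩ := h
  set S := G.neighborSet b ∪ G.neighborSet c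
  have hKS : {b, c, d} ⊆ S := by
    rintro v (rfl | rfl | rfl)
    exacts [Or.inr hbc.symm, Or.inl hbc, Or.inr hcd]
  have hK : ({b, c, d} : Set V).ncard = 3 :=
    Set.ncard_eq_three.mpr ⟨b, c, d, hbc.ne, hbd, hcd.ne, rfl⟩
  have hleaf : ∀ v ∈ S \ {b, c, d}, (G.neighborSet v).Subsingleton := by
    rintro v ⟨hvS, hvK⟩
    simp only [Set.mem_insert_iff, Set.mem_singleton_iff, not_or] at hvK
    obtain ⟨hvb, hvc, hvd⟩ := hvK
    by_cases hva : v = a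
    · subst hva
      exact Set.subsingleton_of_forall_eq b fun w hw =>
        h.eq_of_adj_left_of_adj_second hG hxb hxa hxc hxd hw
    rcases hvS with hv | hv
    · exact Set.subsingleton_of_forall_eq b fun w hw =>
        h.eq_of_adj_of_adj_second hG hv.symm hva hvc hvd hw
    · exact Set.subsingleton_of_forall_eq c fun w hw =>
        h.reverse.eq_of_adj_of_adj_second hG hv.symm hvd hvb hva hw
  have := SimpleGraph.ncard_incidentEdges_le (S := S) (h.neighborClosed hG) hleaf
  rw [Set.ncard_sdiff hKS, hK, show Nat.choose 3 2 = 3 from rfl] at this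
  have := Set.ncard_le_ncard hKS
  omega

theorem exists_neighborClosed [Finite V] (hG : (pathGraph 5).Free G) (h : G.IsP4 a b c d) :
    ∃ S ⊆ G.support, S.Nonempty ∧ G.NeighborClosed S ∧
      (5 ≤ S.ncard → (G.incidentEdges S).ncard ≤ S.ncard) := by
  refine ⟨G.neighborSet b ∪ G.neighborSet c, ?_, ⟨a, Or.inl h.1.symm⟩, h.neighborClosed hG,
    fun h5 => ?_⟩
  · rintro y (hy | hy)
    exacts [⟨b, hy.symm⟩, ⟨c, hy.symm⟩]
  · have h4 : ({a, b, c, d} : Set V).ncard < (G.neighborSet b ∪ G.neighborSet c).ncard := by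
      grw [Set.ncard_insert_le, Set.ncard_insert_le, Set.ncard_insert_le, Set.ncard_singleton]
      omega
    obtain ⟨x, hx, hxabcd⟩ := Set.exists_mem_notMem_of_ncard_lt_ncard h4
    simp only [Set.mem_insert_iff, Set.mem_singleton_iff, not_or] at hxabcd
    obtain ⟨hxa, hxb, hxc, hxd⟩ := hxabcd
    rcases hx with hx | hx
    · exact h.ncard_incidentEdges_le hG hx.symm hxa hxc hxd
    · rw [Set.union_comm]
      exact h.reverse.ncard_incidentEdges_le hG hx.symm hxd hxb hxa

end IsP4

variable {a b w y z : V}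

theorem mem_neighborSet_union_of_forall_not_isP4 (h4 : ∀ a b c d, ¬ G.IsP4 a b c d)
    (hab : G.Adj a b) (hy : G.Adj b y) (hyz : G.Adj y z) :
    z ∈ G.neighborSet a ∪ G.neighborSet b := by
  by_cases hya : y = a
  · exact Or.inl (hya ▸ hyz)
  by_contra hz
  simp only [Set.mem_union, mem_neighborSet, not_or] at hz
  exact h4 z y b a ⟨hyz.symm, hy.symm, hab.symm, fun hzb => hz.1 (hzb ▸ hab),
    fun hza => hz.2 (hza ▸ hab.symm), hya⟩

theorem neighborClosed_of_forall_not_isP4 (h4 : ∀ a b c d, ¬ G.IsP4 a b c d)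
    (hab : G.Adj a b) : G.NeighborClosed (G.neighborSet a ∪ G.neighborSet b) := by
  rintro y z (hy | hy) hyz
  · exact Set.union_comm _ _ ▸ mem_neighborSet_union_of_forall_not_isP4 h4 hab.symm hy hyz
  · exact mem_neighborSet_union_of_forall_not_isP4 h4 hab hy hyz

theorem eq_of_adj_of_forall_not_isP4 (h4 : ∀ a b c d, ¬ G.IsP4 a b c d) (hab : G.Adj a b)
    (hyb : G.Adj y b) (hya : y ≠ a) (hz : z ∈ G.neighborSet a ∪ G.neighborSet b)
    (hza : z ≠ a) (hzb : z ≠ b) (hzy : z ≠ y) (hyw : G.Adj y w) : w = b := by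
  by_contra hwb
  by_cases hwa : w = a
  · subst hwa
    rcases hz with hz | hz
    · exact h4 z w y b ⟨hz.symm, hyw.symm, hyb, hzy, hzb, hab.ne⟩
    · exact h4 z b y w ⟨hz.symm, hyb.symm, hyw, hzy, hza, hab.ne.symm⟩
  · exact h4 w y b a ⟨hyw.symm, hyb, hab.symm, hwb, hwa, hya⟩

theorem ncard_incidentEdges_le_of_forall_not_isP4 [Finite V]
    (h4 : ∀ a b c d, ¬ G.IsP4 a b c d) (hab : G.Adj a b)
    (hS : 4 ≤ (G.neighborSet a ∪ G.neighborSet b).ncard) :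
    (G.incidentEdges (G.neighborSet a ∪ G.neighborSet b)).ncard ≤
      (G.neighborSet a ∪ G.neighborSet b).ncard := by
  set S := G.neighborSet a ∪ G.neighborSet b
  have hKS : {a, b} ⊆ S := by
    rintro v (rfl | rfl)
    exacts [Or.inr hab.symm, Or.inl hab]
  have hleaf : ∀ v ∈ S \ {a, b}, (G.neighborSet v).Subsingleton := by
    rintro v ⟨hvS, hvK⟩
    simp only [Set.mem_insert_iff, Set.mem_singleton_iff, not_or] at hvK
    have h3 : ({a, b, v} : Set V).ncard < S.ncard := by
      grw [Set.ncard_insert_le, Set.ncard_insert_le, Set.ncard_singleton]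
      omega
    obtain ⟨z, hz, hzabv⟩ := Set.exists_mem_notMem_of_ncard_lt_ncard h3
    simp only [Set.mem_insert_iff, Set.mem_singleton_iff, not_or] at hzabv
    obtain ⟨hza, hzb, hzv⟩ := hzabv
    rcases hvS with hv | hv
    · refine Set.subsingleton_of_forall_eq a fun w hw => ?_
      exact eq_of_adj_of_forall_not_isP4 h4 hab.symm hv.symm hvK.2 (Set.union_comm _ _ ▸ hz)
        hzb hza hzv hw
    · exact Set.subsingleton_of_forall_eq b fun w hw =>
        eq_of_adj_of_forall_not_isP4 h4 hab hv.symm hvK.1 hz hza hzb hzv hw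
  have := ncard_incidentEdges_le (S := S) (neighborClosed_of_forall_not_isP4 h4 hab) hleaf
  rw [Set.ncard_sdiff hKS, Set.ncard_pair hab.ne, show Nat.choose 2 2 = 1 from rfl] at this
  omega

theorem exists_neighborClosed_of_forall_not_isP4 [Finite V]
    (h4 : ∀ a b c d, ¬ G.IsP4 a b c d) (hab : G.Adj a b) :
    ∃ S ⊆ G.support, S.Nonempty ∧ G.NeighborClosed S ∧
      (5 ≤ S.ncard → (G.incidentEdges S).ncard ≤ S.ncard) := by
  refine ⟨G.neighborSet a ∪ G.neighborSet b, ?_, ⟨b, Or.inl hab⟩,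
    neighborClosed_of_forall_not_isP4 h4 hab,
    fun h5 => ncard_incidentEdges_le_of_forall_not_isP4 h4 hab (by omega)⟩
  rintro y (hy | hy)
  exacts [⟨a, hy.symm⟩, ⟨b, hy.symm⟩]

theorem exists_neighborClosed_of_free [Finite V] (hG : (pathGraph 5).Free G)
    (hab : G.Adj a b) :
    ∃ S ⊆ G.support, S.Nonempty ∧ G.NeighborClosed S ∧
      (5 ≤ S.ncard → (G.incidentEdges S).ncard ≤ S.ncard) := by
  by_cases h4 : ∃ a b c d, G.IsP4 a b c d
  · obtain ⟨a, b, c, d, h⟩ := h4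
    exact h.exists_neighborClosed hG
  · simp only [not_exists] at h4
    exact exists_neighborClosed_of_forall_not_isP4 h4 hab

theorem support_deleteEdges_incidentEdges_subset (S : Set V) :
    (G.deleteEdges (G.incidentEdges S)).support ⊆ G.support \ S := by
  intro v hv
  obtain ⟨w, hvw⟩ := (mem_support _).mp hv
  rw [deleteEdges_adj] at hvw
  refine ⟨⟨w, hvw.1⟩, fun hv => hvw.2 ?_⟩
  simp only [incidentEdges, Set.mem_iUnion]
  exact ⟨v, hv, hvw.1, Sym2.mem_mk_left v w⟩

theorem ncard_edgeSet_le_p5Bound [Finite V] (hG : (pathGraph 5).Free G) {A : Set V}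
    (hA : G.support ⊆ A) : G.edgeSet.ncard ≤ p5Bound A.ncard := by
  induction hN : A.ncard using Nat.strong_induction_on generalizing G A with
  | _ N ih =>
  obtain hE | ⟨e, he⟩ := G.edgeSet.eq_empty_or_nonempty
  · simp [hE]
  induction e using Sym2.ind with | _ u v =>
  obtain ⟨S, hS, hSne, hSc, h5⟩ := exists_neighborClosed_of_free hG he
  set G' := G.deleteEdges (G.incidentEdges S)
  have hSA : S ⊆ A := hS.trans hA
  have hG' : (pathGraph 5).Free G' := fun h => hG (h.mono_right (G.deleteEdges_le _))
  have hG'A : G'.support ⊆ A \ S :=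
    (support_deleteEdges_incidentEdges_subset S).trans (Set.sdiff_subset_sdiff_left hA)
  have hSN : S.ncard ≤ N := hN ▸ Set.ncard_le_ncard hSA
  have hlt : (A \ S).ncard < N := by
    rw [Set.ncard_sdiff hSA, hN]
    have := (Set.ncard_pos).mpr hSne
    omega
  calc G.edgeSet.ncard ≤ G'.edgeSet.ncard + (G.incidentEdges S).ncard := by
        rw [edgeSet_deleteEdges]
        exact Set.ncard_le_ncard_sdiff_add_ncard _ _
    _ ≤ p5Bound (N - S.ncard) + (G.incidentEdges S).ncard := by
        grw [ih _ hlt hG' hG'A rfl, Set.ncard_sdiff hSA, hN]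
    _ ≤ p5Bound N := p5Bound_sub_add_le hSN
        (by simpa using ncard_incidentEdges_le (K := S) hSc (by simp)) h5

end SimpleGraph

def blockGraph (n : ℕ) : SimpleGraph (Fin n) :=
  SimpleGraph.fromRel fun u v => u.val / 4 = v.val / 4

theorem blockGraph_adj {n : ℕ} {u v : Fin n} :
    (blockGraph n).Adj u v ↔ u ≠ v ∧ u.val / 4 = v.val / 4 := by
  rw [blockGraph, fromRel_adj, or_iff_left_of_imp Eq.symm]

instance (n : ℕ) : DecidableRel (blockGraph n).Adj :=
  fun _ _ => decidable_of_iff' _ blockGraph_adj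

theorem free_blockGraph (n : ℕ) : (pathGraph 5).Free (blockGraph n) := by
  rintro ⟨⟨f, hf⟩⟩
  have hstep (i : Fin 4) : (f i.castSucc).val / 4 = (f i.succ).val / 4 :=
    (blockGraph_adj.mp (f.map_adj (pathGraph_adj.mpr (Or.inl (by simp))))).2
  have hblock (i : Fin 5) : (f i).val / 4 = (f 0).val / 4 := by
    have := hstep 0; have := hstep 1; have := hstep 2; have := hstep 3
    fin_cases i <;> simp_all
  have hinj : Function.Injective fun i => (⟨(f i).val % 4, by omega⟩ : Fin 4) := by
    intro i j hij
    have := hblock i; have := hblock j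
    simp only [Fin.mk.injEq] at hij
    exact hf (Fin.ext (by omega))
  simpa using Fintype.card_le_of_injective _ hinj

theorem degree_blockGraph {n : ℕ} (v : Fin n) :
    (blockGraph n).degree v = min (4 * (v.val / 4) + 4) n - 4 * (v.val / 4) - 1 := by
  have hblock : (Finset.univ.filter fun u : Fin n => u.val / 4 = v.val / 4).map Fin.valEmbedding =
      Finset.Ico (4 * (v.val / 4)) (min (4 * (v.val / 4) + 4) n) := by
    ext u
    simp only [Finset.mem_map, Finset.mem_filter, Finset.mem_univ, true_and,
      Fin.valEmbedding_apply, Finset.mem_Ico]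
    constructor
    · rintro ⟨u, hu, rfl⟩
      omega
    · intro hu
      exact ⟨⟨u, by omega⟩, by simp only; omega, rfl⟩
  have hnbr : (blockGraph n).neighborFinset v =
      (Finset.univ.filter fun u : Fin n => u.val / 4 = v.val / 4).erase v := by
    ext u
    simp [blockGraph_adj, eq_comm]
  rw [← card_neighborFinset_eq_degree, hnbr, Finset.card_erase_of_mem (by simp),
    ← Finset.card_map, hblock, Nat.card_Ico]

theorem sum_degree_blockGraph (n : ℕ) : ∑ v, (blockGraph n).degree v = 2 * p5Bound n := by
  simp only [degree_blockGraph]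
  rw [Fin.sum_univ_eq_sum_range (fun v => min (4 * (v / 4) + 4) n - 4 * (v / 4) - 1)]
  obtain ⟨q, r, hr, rfl⟩ : ∃ q r, r < 4 ∧ n = 4 * q + r := ⟨n / 4, n % 4, by omega, by omega⟩
  have hfull : ∑ v ∈ Finset.range (4 * q),
      (min (4 * (v / 4) + 4) (4 * q + r) - 4 * (v / 4) - 1) = ∑ v ∈ Finset.range (4 * q), 3 :=
    Finset.sum_congr rfl fun v hv => by simp only [Finset.mem_range] at hv; omega
  have hrest : ∑ v ∈ Finset.range r,
      (min (4 * ((4 * q + v) / 4) + 4) (4 * q + r) - 4 * ((4 * q + v) / 4) - 1) =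
      ∑ v ∈ Finset.range r, (r - 1) :=
    Finset.sum_congr rfl fun v hv => by simp only [Finset.mem_range] at hv; omega
  rw [Finset.sum_range_add, hfull, hrest]
  simp only [Finset.sum_const, Finset.card_range, smul_eq_mul, p5Bound]
  interval_cases r <;> split_ifs <;> omega

theorem ncard_edgeSet_blockGraph (n : ℕ) : (blockGraph n).edgeSet.ncard = p5Bound n := by
  have h := (blockGraph n).sum_degrees_eq_twice_card_edges
  rw [sum_degree_blockGraph] at h
  rw [← coe_edgeFinset, Set.ncard_coe_finset]
  omega

theorem extremal_number_P5_general (n : ℕ) :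
    IsGreatest {m | ∃ G : SimpleGraph (Fin n),
        ¬ Contains G (SimpleGraph.pathGraph 5) ∧ G.edgeSet.ncard = m}
      (if n % 4 = 0 then 3 * n / 2
       else if n % 4 = 2 then 3 * n / 2 - 2
       else (3 * n - 3) / 2) := by
  refine ⟨⟨blockGraph n, contains_iff_isContained.not.mpr (free_blockGraph n),
    ncard_edgeSet_blockGraph n⟩, ?_⟩
  rintro _ ⟨G, hG, rfl⟩
  have := ncard_edgeSet_le_p5Bound (contains_iff_isContained.not.mp hG) (Set.subset_univ _)
  rwa [Set.ncard_univ, Nat.card_fin] at this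

theorem extremal_number_P5 (n : ℕ) (hn : 3 ≤ n) :
    IsGreatest {m | ∃ G : SimpleGraph (Fin n),
        ¬ Contains G (SimpleGraph.pathGraph 5) ∧ G.edgeSet.ncard = m}
      (if n % 4 = 0 then 3 * n / 2
       else if n % 4 = 2 then 3 * n / 2 - 2
       else (3 * n - 3) / 2) :=
  extremal_number_P5_general n
end

section
/- R(P_3, P_3, P_m) = m for all m ≥ 5. -/
open SimpleGraph

/-!
If neither colour 0 nor colour 1 contains a `P₃`, both are matchings, so in the colour-2 graph
`G` on `m` vertices every vertex has at most two non-neighbours. Then a longest path of `G` is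
Hamiltonian once `m ≥ 5`. An end `x` of it has at least `m - 3 ≥ 2` neighbours, all on the path,
so the path has at least three vertices. A vertex `w` off the path is adjacent to neither end,
hence to every inner vertex: with four or more vertices it can be inserted between the second and
the third, and for a path `x y z` the end `x` must be adjacent to `z`, so `w y x z` is longer.
Colouring `K_{m-1}` entirely with colour 2 shows that `m` is least.
-/

namespace SimpleGraph

variable {V : Type*} {G : SimpleGraph V} {u v w x y z : V}

theorem contains_pathGraph_of_isChain {l : List V} (hnd : l.Nodup) (hc : l.IsChain G.Adj) :
    Contains G (pathGraph l.length) := by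
  classical
  obtain rfl | hne := eq_or_ne l []
  · rw [List.length_nil]
    exact ⟨⟨isEmptyElim, fun {i} => isEmptyElim i⟩, fun i => isEmptyElim i⟩
  let p := Walk.ofSupport l hne hc
  have hp : p.IsPath := Walk.IsPath.mk' (by rwa [Walk.support_ofSupport])
  have hlen : p.length + 1 = l.length := by
    rw [Walk.length_ofSupport]; exact Nat.sub_add_cancel (List.length_pos_iff.2 hne)
  rw [← hlen]
  exact ⟨hp.pathGraphCopy.toHom, hp.pathGraphCopy.injective⟩

theorem not_contains_of_ne_bot {W : Type*} {H : SimpleGraph W} (hH : H ≠ ⊥) :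
    ¬Contains (⊥ : SimpleGraph V) H := fun ⟨f, _⟩ =>
  let ⟨_, _, hab⟩ := ne_bot_iff_exists_adj.1 hH
  f.map_rel hab

theorem pathGraph_ne_bot {n : ℕ} (hn : 2 ≤ n) : pathGraph n ≠ ⊥ :=
  ne_bot_iff_exists_adj.2 ⟨⟨0, by omega⟩, ⟨1, hn⟩, pathGraph_adj.2 (Or.inl rfl)⟩

theorem degree_le_one_of_not_contains_pathGraph_three [Fintype (G.neighborSet v)]
    (h : ¬Contains G (pathGraph 3)) : G.degree v ≤ 1 := by
  by_contra! hdeg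
  obtain ⟨a, ha, b, hb, hab⟩ := Finset.one_lt_card.1 hdeg
  rw [mem_neighborFinset] at ha hb
  refine h (contains_pathGraph_of_isChain (l := [a, v, b]) ?_ ?_)
  · simp [hab, ha.ne', hb.ne]
  · simp [ha.symm, hb]

theorem degree_sup_le [Fintype V] [DecidableEq V] (G₁ G₂ : SimpleGraph V) [DecidableRel G₁.Adj]
    [DecidableRel G₂.Adj] (v : V) : (G₁ ⊔ G₂).degree v ≤ G₁.degree v + G₂.degree v := by
  simp only [← card_neighborFinset_eq_degree, neighborFinset_sup]
  exact Finset.card_union_le _ _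

structure IsLongestPath (G : SimpleGraph V) (l : List V) : Prop where
  nodup : l.Nodup
  isChain : l.IsChain G.Adj
  length_le : ∀ l' : List V, l'.Nodup → l'.IsChain G.Adj → l'.length ≤ l.length

theorem exists_isLongestPath [Fintype V] (G : SimpleGraph V) : ∃ l, G.IsLongestPath l := by
  classical
  obtain ⟨l, hnd, hc, hl⟩ := Nat.findGreatest_spec (P := fun n =>
      ∃ l : List V, l.Nodup ∧ l.IsChain G.Adj ∧ l.length = n) (Nat.zero_le (Fintype.card V))
    ⟨[], List.nodup_nil, List.isChain_nil, rfl⟩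
  exact ⟨l, hnd, hc, fun l' hnd' hc' =>
    hl ▸ Nat.le_findGreatest hnd'.length_le_card ⟨l', hnd', hc', rfl⟩⟩

namespace IsLongestPath

variable {l : List V}

theorem reverse (h : G.IsLongestPath l) : G.IsLongestPath l.reverse :=
  ⟨List.nodup_reverse.2 h.nodup, List.isChain_reverse.2 (h.isChain.imp fun _ _ hab => hab.symm),
    fun l' hnd' hc' => (h.length_le l' hnd' hc').trans_eq l.length_reverse.symm⟩

theorem not_adj_head (h : G.IsLongestPath l) (hu : u ∉ l) (hx : x ∈ l.head?) : ¬G.Adj u x :=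
  fun hux => (h.length_le (u :: l) (List.nodup_cons.2 ⟨hu, h.nodup⟩)
    (h.isChain.cons fun y hy => Option.mem_unique hy hx ▸ hux)).not_gt (by simp)

theorem not_adj_getLast (h : G.IsLongestPath l) (hu : u ∉ l) (hz : z ∈ l.getLast?) :
    ¬G.Adj u z :=
  h.reverse.not_adj_head (by simpa using hu) (by simpa [List.head?_reverse] using hz)

end IsLongestPath

section SpanningPath

variable [Fintype V] [DecidableEq V] [DecidableRel G.Adj]

theorem two_le_degree_of_compl_degree_le_two (hn : 5 ≤ Fintype.card V) (hv : Gᶜ.degree v ≤ 2) :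
    2 ≤ G.degree v := by
  have := G.degree_lt_card_verts v
  rw [degree_compl] at hv
  omega

theorem adj_of_compl_degree_le_two (hw : Gᶜ.degree w ≤ 2) (hx : Gᶜ.Adj w x) (hz : Gᶜ.Adj w z)
    (hxz : x ≠ z) (hy : y ∉ ({w, x, z} : Finset V)) : G.Adj w y := by
  by_contra hwy
  simp only [Finset.mem_insert, Finset.mem_singleton, not_or] at hy
  have hsub : ({x, z, y} : Finset V) ⊆ Gᶜ.neighborFinset w := by
    simp [Finset.insert_subset_iff, hx, hz, (compl_adj G w y).2 ⟨Ne.symm hy.1, hwy⟩]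
  have := Finset.card_le_card hsub
  rw [Finset.card_insert_of_notMem (by simp [hxz, Ne.symm hy.2.1]),
    Finset.card_pair (Ne.symm hy.2.2), card_neighborFinset_eq_degree] at this
  omega

theorem IsLongestPath.mem (hn : 5 ≤ Fintype.card V) (hG : ∀ v, Gᶜ.degree v ≤ 2) {l : List V}
    (h : G.IsLongestPath l) (w : V) : w ∈ l := by
  by_contra hw
  rcases l with _ | ⟨x, t⟩
  · exact (h.length_le [w] (List.nodup_singleton w) (List.isChain_singleton w)).not_gt (by simp)
  have hwx : Gᶜ.Adj w x := ⟨by grind, h.not_adj_head hw rfl⟩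
  -- a neighbour of `x` other than its successor; it lies on the path
  obtain ⟨b, hxb, hb⟩ : ∃ b, G.Adj x b ∧ b ≠ t.headD x := by
    obtain ⟨b, hb, hne⟩ := Finset.exists_mem_ne
      (two_le_degree_of_compl_degree_le_two hn (hG x)) (t.headD x)
    exact ⟨b, (mem_neighborFinset _ _ _).1 hb, hne⟩
  have hbl : b ∈ x :: t := by
    by_contra hbl; exact h.not_adj_head hbl rfl hxb.symm
  have hnd := h.nodup
  have hc := h.isChain
  rcases t with _ | ⟨y, _ | ⟨u, _ | ⟨v, t⟩⟩⟩
  · simp_all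
  · simp_all
  · have hbu : b = u := by simp_all [hxb.ne']
    subst hbu
    have hwb : Gᶜ.Adj w b := ⟨by grind, h.not_adj_getLast hw rfl⟩
    have hwy : G.Adj w y := adj_of_compl_degree_le_two (hG w) hwx hwb (by grind) (by simp; grind)
    refine (h.length_le [w, y, x, b] ?_ ?_).not_gt (by simp)
    · simp_all; grind
    · simp [hwy, hxb, (List.isChain_cons_cons.1 hc).1.symm]
  · have hz : (v :: t).getLast (List.cons_ne_nil _ _) ∈ v :: t := List.getLast_mem _
    have hwz : Gᶜ.Adj w ((v :: t).getLast (List.cons_ne_nil _ _)) :=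
      ⟨by grind, h.not_adj_getLast hw (by simp [List.getLast?_eq_some_getLast])⟩
    have hxz : x ≠ (v :: t).getLast (List.cons_ne_nil _ _) := by grind
    have hwy : G.Adj w y := adj_of_compl_degree_le_two (hG w) hwx hwz hxz (by simp; grind)
    have hwu : G.Adj w u := adj_of_compl_degree_le_two (hG w) hwx hwz hxz (by simp; grind)
    refine (h.length_le (x :: y :: w :: u :: v :: t) ?_ ?_).not_gt (by simp)
    · simp_all; grind
    · simp_all [hwy.symm]

theorem contains_pathGraph_card_of_compl_degree_le_two (hn : 5 ≤ Fintype.card V)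
    (hG : ∀ v, Gᶜ.degree v ≤ 2) : Contains G (pathGraph (Fintype.card V)) := by
  obtain ⟨l, hl⟩ := G.exists_isLongestPath
  have hcard : l.length = Fintype.card V := by
    rw [← List.toFinset_card_of_nodup hl.nodup,
      Finset.eq_univ_of_forall fun w => List.mem_toFinset.2 (hl.mem hn hG w), Finset.card_univ]
  exact hcard ▸ contains_pathGraph_of_isChain hl.nodup hl.isChain

end SpanningPath

end SimpleGraph

theorem compl_colorClass_two_le {N : ℕ} (c : Sym2 (Fin N) → Fin 3) :
    (colorClass c 2)ᶜ ≤ colorClass c 0 ⊔ colorClass c 1 := by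
  intro u v huv
  simp only [compl_adj, colorClass, sup_adj, fromRel_adj, Sym2.eq_swap (a := v), or_self] at huv ⊢
  have := huv.1
  generalize c s(u, v) = a at huv
  fin_cases a <;> simp_all

theorem colorClass_const_eq_bot {N k : ℕ} {i j : Fin k} (hij : i ≠ j) :
    colorClass (fun _ : Sym2 (Fin N) => j) i = ⊥ := by
  ext u v
  simp [colorClass, Ne.symm hij]

theorem card_le_of_ramseyProp3 {V W X : Type*} [Fintype X] {N : ℕ} {G₀ : SimpleGraph V}
    {G₁ : SimpleGraph W} {H : SimpleGraph X} (h₀ : G₀ ≠ ⊥) (h₁ : G₁ ≠ ⊥)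
    (h : ramseyProp3 N G₀ G₁ H) : Fintype.card X ≤ N := by
  obtain hc | hc | ⟨f, hf⟩ := h fun _ => 2
  · exact absurd hc (colorClass_const_eq_bot (show (0 : Fin 3) ≠ 2 by decide) ▸
      not_contains_of_ne_bot h₀)
  · exact absurd hc (colorClass_const_eq_bot (show (1 : Fin 3) ≠ 2 by decide) ▸
      not_contains_of_ne_bot h₁)
  · simpa using Fintype.card_le_of_injective f hf

theorem ramseyProp3_pathGraph_three_three {m : ℕ} (hm : 5 ≤ m) :
    ramseyProp3 m (pathGraph 3) (pathGraph 3) (pathGraph m) := by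
  classical
  intro c
  by_contra! h
  obtain ⟨h₀, h₁, h₂⟩ := h
  have hdeg : ∀ v, (colorClass c 2)ᶜ.degree v ≤ 2 := fun v => calc
    (colorClass c 2)ᶜ.degree v
      ≤ (colorClass c 0 ⊔ colorClass c 1).degree v := degree_le_of_le (compl_colorClass_two_le c)
    _ ≤ (colorClass c 0).degree v + (colorClass c 1).degree v := degree_sup_le _ _ v
    _ ≤ 2 := add_le_add (degree_le_one_of_not_contains_pathGraph_three h₀)
        (degree_le_one_of_not_contains_pathGraph_three h₁)
  have hpath := contains_pathGraph_card_of_compl_degree_le_two (by simpa) hdeg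
  rw [Fintype.card_fin] at hpath
  exact h₂ hpath

theorem ramsey_P3_P3_Pm (m : ℕ) (hm : 5 ≤ m) :
    IsLeast {N | ramseyProp3 N (SimpleGraph.pathGraph 3) (SimpleGraph.pathGraph 3)
      (SimpleGraph.pathGraph m)} m :=
  ⟨ramseyProp3_pathGraph_three_three hm, fun _ hN => by
    simpa using card_le_of_ramseyProp3 (pathGraph_ne_bot (by norm_num))
      (pathGraph_ne_bot (by omega)) hN⟩
end

section
/- Let G be the graph obtained from the complete bipartite graph K_{3,4} by removing one edge. If each edge of G is colored red or blue, then G contains a red path P_3 or a blue path P_7. -/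
open SimpleGraph

/-!
Since there is no red `P₃`, the red edges of `G` form a matching, so the blue graph contains
`K_{3,4}` minus a matching and one further edge. Such a graph has a Hamiltonian path, necessarily
of the form `b₁ a₁ b₂ a₂ b₃ a₃ b₄` with the `aᵢ` in the part of size 3; this is checked by
exhaustive search over the position of the extra edge and the matching.
-/

namespace SimpleGraph

variable {V W : Type*}

theorem Contains.mono {G G' : SimpleGraph V} {H : SimpleGraph W} (hle : G ≤ G') :
    Contains G H → Contains G' H
  | ⟨f, hf⟩ => ⟨(Hom.ofLE hle).comp f, hf⟩

theorem contains_pathGraph_of_nodup_isChain {G : SimpleGraph V} {l : List V} (hl : l.Nodup)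
    (hc : l.IsChain G.Adj) : Contains G (pathGraph l.length) := by
  refine ⟨⟨fun i => l[i], fun {i j} hij => ?_⟩, fun i j hij => Fin.ext (hl.getElem_inj_iff.mp hij)⟩
  obtain ⟨i, hi⟩ := i
  obtain ⟨j, hj⟩ := j
  rcases pathGraph_adj.mp hij with rfl | rfl
  · exact hc.getElem i hj
  · exact (hc.getElem j hi).symm

theorem contains_pathGraph_three {G : SimpleGraph V} {u v w : V} (huv : G.Adj u v)
    (hvw : G.Adj v w) (huw : u ≠ w) : Contains G (pathGraph 3) :=
  contains_pathGraph_of_nodup_isChain (G := G) (l := [u, v, w]) (by simp [huv.ne, hvw.ne, huw])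
    (by simp [huv, hvw])

theorem eq_of_adj_of_adj_of_not_contains_pathGraph_three {G : SimpleGraph V}
    (h : ¬Contains G (pathGraph 3)) {u v w : V} (hu : G.Adj v u) (hw : G.Adj v w) : u = w :=
  by_contra fun huw => h (contains_pathGraph_three hu.symm hw huw)

theorem fromRel_adj_and_eq {κ : Type*} (G : SimpleGraph V) (c : Sym2 V → κ) (i : κ) {u v : V} :
    (fromRel fun u v => G.Adj u v ∧ c s(u, v) = i).Adj u v ↔ G.Adj u v ∧ c s(u, v) = i := by
  rw [fromRel_adj, Sym2.eq_swap (a := v), G.adj_comm v]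
  exact ⟨fun h => h.2.elim id id, fun h => ⟨h.1.ne, .inl h⟩⟩

section Bipartite

variable {α β : Type*}

def bipartiteOfRel (R : α → β → Prop) : SimpleGraph (α ⊕ β) where
  Adj
    | .inl a, .inr b => R a b
    | .inr b, .inl a => R a b
    | _, _ => False
  symm := ⟨by rintro (a | b) (a' | b') h <;> exact h⟩
  loopless := ⟨by rintro (a | b) h <;> exact h⟩

instance (R : α → β → Prop) [∀ a b, Decidable (R a b)] : DecidableRel (bipartiteOfRel R).Adj
  | .inl _, .inr _ => inferInstanceAs (Decidable (R _ _))
  | .inr _, .inl _ => inferInstanceAs (Decidable (R _ _))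
  | .inl _, .inl _ => inferInstanceAs (Decidable False)
  | .inr _, .inr _ => inferInstanceAs (Decidable False)

theorem bipartiteOfRel_le {R : α → β → Prop} {G : SimpleGraph (α ⊕ β)}
    (h : ∀ a b, R a b → G.Adj (.inl a) (.inr b)) : bipartiteOfRel R ≤ G := by
  rintro (a | b) (a' | b') hR
  · exact hR.elim
  · exact h a b' hR
  · exact (h a' b hR).symm
  · exact hR.elim

theorem exists_eq_inl_inr_of_mem_edgeSet {e : Sym2 (α ⊕ β)}
    (he : e ∈ (completeBipartiteGraph α β).edgeSet) : ∃ a b, e = s(.inl a, .inr b) := by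
  induction e using Sym2.ind with
  | _ u v =>
    rcases u with a | b <;> rcases v with a' | b' <;> simp at he
    · exact ⟨a, b', rfl⟩
    · exact ⟨a', b, Sym2.eq_swap⟩

theorem completeBipartiteGraph_sdiff_adj_inl_inr (x a : α) (y b : β) :
    (completeBipartiteGraph α β \ fromEdgeSet {s(.inl x, .inr y)}).Adj (.inl a) (.inr b) ↔
      ¬(a = x ∧ b = y) := by
  simp [and_comm]

end Bipartite

end SimpleGraph

theorem exists_option_eq_some_iff {α β : Type*} {R : α → β → Prop}
    (hR : ∀ a b b', R a b → R a b' → b = b') : ∃ r : α → Option β, ∀ a b, r a = some b ↔ R a b := by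
  classical
  refine ⟨fun a => if h : ∃ b, R a b then some h.choose else none, fun a b => ?_⟩
  dsimp only
  split_ifs with h
  · exact ⟨fun hb => Option.some_injective _ hb ▸ h.choose_spec, fun hb => by
      rw [hR a _ _ h.choose_spec hb]⟩
  · exact ⟨nofun, fun hb => (h ⟨b, hb⟩).elim⟩

/-- The interleavings `b₁ a₁ b₂ a₂ b₃ a₃ b₄` of the orderings of `Fin 3` with those of `Fin 4`. -/
def alternatingLists : List (List (Fin 3 ⊕ Fin 4)) :=
  (List.finRange 3).permutations'.flatMap fun p => (List.finRange 4).permutations'.map fun q =>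
    .inr (q.headD 0) :: (p.zip q.tail).flatMap fun ab => [.inl ab.1, .inr ab.2]

/-- The graph here is `K_{3,4}` minus the matching `{a b | r a = some b}` and the edge `x y`. -/
theorem contains_pathGraph_seven_of_matching_add_edge (x : Fin 3) (y : Fin 4)
    (r : Fin 3 → Option (Fin 4)) (hr : ∀ a a' b, r a = some b → r a' = some b → a = a') :
    Contains (bipartiteOfRel fun a b => ¬(a = x ∧ b = y) ∧ r a ≠ some b) (pathGraph 7) := by
  have key : ∀ (x : Fin 3) (y : Fin 4) (r : Fin 3 → Option (Fin 4)),
      (∀ a a' b, r a = some b → r a' = some b → a = a') →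
      ∃ l ∈ alternatingLists, l.length = 7 ∧ l.Nodup ∧
        l.IsChain (bipartiteOfRel fun a b => ¬(a = x ∧ b = y) ∧ r a ≠ some b).Adj := by
    set_option synthInstance.maxHeartbeats 200000 in
    set_option synthInstance.maxSize 2000 in
    decide +kernel
  obtain ⟨l, -, hlen, hnd, hc⟩ := key x y r hr
  exact hlen ▸ contains_pathGraph_of_nodup_isChain hnd hc

theorem K34_minus_edge_red_P3_or_blue_P7
    (e : Sym2 (Fin 3 ⊕ Fin 4))
    (he : e ∈ (completeBipartiteGraph (Fin 3) (Fin 4)).edgeSet)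
    (c : Sym2 (Fin 3 ⊕ Fin 4) → Fin 2) :
    let G := completeBipartiteGraph (Fin 3) (Fin 4) \ SimpleGraph.fromEdgeSet {e}
    Contains (SimpleGraph.fromRel (fun u v => G.Adj u v ∧ c s(u, v) = 0))
      (SimpleGraph.pathGraph 3) ∨
    Contains (SimpleGraph.fromRel (fun u v => G.Adj u v ∧ c s(u, v) = 1))
      (SimpleGraph.pathGraph 7) := by
  intro G
  obtain ⟨x, y, rfl⟩ := exists_eq_inl_inr_of_mem_edgeSet he
  refine or_iff_not_imp_left.mpr fun hred => ?_
  set Red := fromRel fun u v => G.Adj u v ∧ c s(u, v) = 0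
  have red_unique {u v w} : Red.Adj v u → Red.Adj v w → u = w :=
    eq_of_adj_of_adj_of_not_contains_pathGraph_three hred
  obtain ⟨r, hr⟩ := exists_option_eq_some_iff (R := fun a b => Red.Adj (.inl a) (.inr b))
    fun a b b' hb hb' => Sum.inr_injective (red_unique hb hb')
  refine (contains_pathGraph_seven_of_matching_add_edge x y r fun a a' b ha ha' => ?_).mono
    (bipartiteOfRel_le fun a b ⟨hxy, hab⟩ => ?_)
  · rw [hr] at ha ha'
    exact Sum.inl_injective (red_unique ha.symm ha'.symm)
  · have hG := (completeBipartiteGraph_sdiff_adj_inl_inr x a y b).mpr hxy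
    have hc : c s(.inl a, .inr b) ≠ 0 := fun h0 =>
      hab ((hr a b).mpr ((fromRel_adj_and_eq G c 0).mpr ⟨hG, h0⟩))
    exact (fromRel_adj_and_eq G c 1).mpr ⟨hG, Fin.eq_one_of_ne_zero _ hc⟩
end

section
/- For all m ≥ n ≥ 3, R(P_3, nK_2, mK_2) = 2m + n - 1, where kK_2 denotes a matching of k edges. -/
/-!
Upper bound. If colour 0 contains no `P₃`, it is a matching. If colour 2 (say) is absent from a
vertex set `S`, any three vertices of `S` span a colour-1 edge, so greedily removing colour-1
edges yields a colour-1 matching of size `k` once `|S| ≥ 2k + 1`. Otherwise some vertex `q`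
carries both a colour-1 edge `qp` and a colour-2 edge `qr`. For `n < m` delete `q, r` and induct
on `m`; for `n = m ≥ 3` delete `p, q, r` and pass to `n - 1 = m - 1`; the base case `n = m = 2`
on five vertices is checked by hand.

Lower bound. On `2m + n - 2` vertices give colour 1 to the edges meeting a fixed set `A` of
`n - 1` vertices and colour 2 to all others: colour 0 is empty, `A` covers every colour-1 edge,
and colour 2 lives on the `2m - 1` vertices outside `A`.
-/

open SimpleGraph

open Finset

variable {V : Type*}

def MatchingIn (G : SimpleGraph V) (k : ℕ) (S : Finset V) : Prop :=
  ∃ f : Fin k × Fin 2 → V, Function.Injective f ∧ (∀ p, f p ∈ S) ∧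
    ∀ j, G.Adj (f (j, 0)) (f (j, 1))

theorem matchingGraph_adj_zero_one {k : ℕ} (j : Fin k) : (matchingGraph k).Adj (j, 0) (j, 1) := by
  simp [matchingGraph]

namespace MatchingIn

variable {G : SimpleGraph V} {k : ℕ} {S T : Finset V}

theorem zero (G : SimpleGraph V) (S : Finset V) : MatchingIn G 0 S :=
  ⟨fun p => p.1.elim0, fun p => p.1.elim0, fun p => p.1.elim0, fun j => j.elim0⟩

theorem mono (h : MatchingIn G k S) (hST : S ⊆ T) : MatchingIn G k T :=
  let ⟨f, hf, hfS, hfG⟩ := h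
  ⟨f, hf, fun p => hST (hfS p), hfG⟩

theorem insert_edge [DecidableEq V] {a b : V} (h : MatchingIn G k (S \ {a, b}))
    (ha : a ∈ S) (hb : b ∈ S) (hab : G.Adj a b) : MatchingIn G (k + 1) S := by
  obtain ⟨f, hf, hfS, hfG⟩ := h
  have hfa : ∀ p, f p ≠ a := fun p h => by simpa [h] using hfS p
  have hfb : ∀ p, f p ≠ b := fun p h => by simpa [h] using hfS p
  refine ⟨fun p => Fin.cases (![a, b] p.2) (fun j => f (j, p.2)) p.1, ?_, ?_, ?_⟩
  · rintro ⟨j, t⟩ ⟨j', t'⟩ h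
    induction j using Fin.cases <;> induction j' using Fin.cases <;>
      fin_cases t <;> fin_cases t' <;>
      simp_all [hab.ne, hab.ne.symm, (hfa _).symm, (hfb _).symm, hf.eq_iff]
  · rintro ⟨j, t⟩
    induction j using Fin.cases
    · fin_cases t <;> simpa
    · exact (mem_sdiff.1 (hfS _)).1
  · intro j
    induction j using Fin.cases
    · simpa
    · simpa using hfG _

theorem of_two_edges {a b c d : V} (ha : a ∈ S) (hb : b ∈ S) (hc : c ∈ S) (hd : d ∈ S)
    (hab : G.Adj a b) (hcd : G.Adj c d) (hac : a ≠ c) (had : a ≠ d) (hbc : b ≠ c)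
    (hbd : b ≠ d) : MatchingIn G 2 S := by
  refine ⟨fun p => ![![a, b], ![c, d]] p.1 p.2, ?_, ?_, ?_⟩
  · rintro ⟨j, t⟩ ⟨j', t'⟩ h
    fin_cases j <;> fin_cases j' <;> fin_cases t <;> fin_cases t' <;>
      simp_all [hab.ne, hcd.ne, hab.ne.symm, hcd.ne.symm, hac.symm, had.symm, hbc.symm, hbd.symm]
  · rintro ⟨j, t⟩
    fin_cases j <;> fin_cases t <;> assumption
  · intro j
    fin_cases j <;> assumption

theorem contains (h : MatchingIn G k S) : Contains G (matchingGraph k) := by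
  obtain ⟨f, hf, -, hfG⟩ := h
  refine ⟨⟨f, ?_⟩, hf⟩
  rintro ⟨j, t⟩ ⟨j', t'⟩ hadj
  obtain ⟨hne, rfl | rfl⟩ := (fromRel_adj _ _ _).1 hadj <;>
    fin_cases t <;> fin_cases t' <;> simp_all [(hfG _).symm]

end MatchingIn

theorem eq_of_adj_of_adj_of_not_contains_pathGraph {G : SimpleGraph V}
    (hP : ¬ Contains G (pathGraph 3)) {a b d : V} (hba : G.Adj b a) (hbd : G.Adj b d) :
    a = d := by
  by_contra had
  refine hP ⟨⟨![a, b, d], fun {u v} huv => ?_⟩, fun u v huv => ?_⟩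
  · rw [pathGraph_adj] at huv
    fin_cases u <;> fin_cases v <;> simp_all [hba.symm, hbd.symm]
  · fin_cases u <;> fin_cases v <;> simp_all [hba.ne, hbd.ne, hba.ne.symm, hbd.ne.symm, Ne.symm had]

section Cover

variable {G₀ G₁ G₂ H : SimpleGraph V}

theorem matchingIn_of_adj_or_adj [DecidableEq V] (hP : ¬ Contains G₀ (pathGraph 3))
    (k : ℕ) {S : Finset V} (hS : ∀ u ∈ S, ∀ v ∈ S, u ≠ v → G₀.Adj u v ∨ H.Adj u v)
    (hcard : 2 * k + 1 ≤ #S) : MatchingIn H k S := by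
  induction k generalizing S with
  | zero => exact MatchingIn.zero H S
  | succ k ih =>
    have hedge : ∃ a ∈ S, ∃ b ∈ S, H.Adj a b := by
      obtain ⟨a, ha, b, hb, d, hd, hab, had, hbd⟩ := two_lt_card.1 (by omega : 2 < #S)
      rcases hS a ha b hb hab with h0ab | hHab
      · rcases hS a ha d hd had with h0ad | hHad
        · exact absurd (eq_of_adj_of_adj_of_not_contains_pathGraph hP h0ab h0ad) hbd
        · exact ⟨a, ha, d, hd, hHad⟩
      · exact ⟨a, ha, b, hb, hHab⟩
    obtain ⟨a, ha, b, hb, hab⟩ := hedge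
    refine (ih (fun u hu v hv => hS u (sdiff_subset hu) v (sdiff_subset hv)) ?_)
      |>.insert_edge ha hb hab
    have := le_card_sdiff {a, b} S
    have := card_le_two (a := a) (b := b)
    omega

theorem exists_adj_adj_of_adj_of_adj (hP : ¬ Contains G₀ (pathGraph 3))
    (hcover : ∀ u v, u ≠ v → G₀.Adj u v ∨ G₁.Adj u v ∨ G₂.Adj u v) {S : Finset V}
    {x y z w : V} (hx : x ∈ S) (hy : y ∈ S) (hz : z ∈ S) (hw : w ∈ S)
    (hxy : G₁.Adj x y) (hzw : G₂.Adj z w) :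
    ∃ q ∈ S, ∃ p ∈ S, ∃ r ∈ S, G₁.Adj q p ∧ G₂.Adj q r := by
  rcases eq_or_ne x z with rfl | hxz
  · exact ⟨x, hx, y, hy, w, hw, hxy, hzw⟩
  rcases eq_or_ne x w with rfl | hxw
  · exact ⟨x, hx, y, hy, z, hz, hxy, hzw.symm⟩
  rcases hcover x z hxz with h0xz | h1xz | h2xz
  · rcases hcover x w hxw with h0xw | h1xw | h2xw
    · exact absurd (eq_of_adj_of_adj_of_not_contains_pathGraph hP h0xz h0xw) hzw.ne
    · exact ⟨w, hw, x, hx, z, hz, h1xw.symm, hzw.symm⟩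
    · exact ⟨x, hx, y, hy, w, hw, hxy, h2xw⟩
  · exact ⟨z, hz, x, hx, w, hw, h1xz.symm, hzw⟩
  · exact ⟨x, hx, y, hy, z, hz, hxy, h2xz⟩

theorem matchingIn_two_or_matchingIn_two_of_adj_adj [DecidableEq V]
    (hP : ¬ Contains G₀ (pathGraph 3))
    (hcover : ∀ u v, u ≠ v → G₀.Adj u v ∨ G₁.Adj u v ∨ G₂.Adj u v) (hdisj : Disjoint G₁ G₂)
    {S : Finset V} (hS : 5 ≤ #S) {x y z : V} (hx : x ∈ S) (hy : y ∈ S) (hz : z ∈ S)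
    (hyx : G₁.Adj y x) (hyz : G₂.Adj y z) : MatchingIn G₁ 2 S ∨ MatchingIn G₂ 2 S := by
  have hxz : x ≠ z := by
    rintro rfl
    exact hdisj.le_bot (show (G₁ ⊓ G₂).Adj y x from ⟨hyx, hyz⟩)
  have hxy := hyx.ne.symm
  have hzy := hyz.ne.symm
  obtain ⟨u, hu, w, hw, huw⟩ : ∃ u ∈ S \ {x, y, z}, ∃ w ∈ S \ {x, y, z}, u ≠ w := by
    have := le_card_sdiff {x, y, z} S
    have := card_le_three (a := x) (b := y) (c := z)
    exact one_lt_card.1 (by omega)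
  simp only [mem_sdiff, mem_insert, mem_singleton, not_or] at hu hw
  obtain ⟨hu, hux, huy, huz⟩ := hu
  obtain ⟨hw, hwx, hwy, hwz⟩ := hw
  rcases hcover u w huw with h0uw | h1uw | h2uw
  · have h12 : ∀ a b, G₀.Adj a b → ∀ v, v ≠ a → v ≠ b → G₁.Adj b v ∨ G₂.Adj b v :=
      fun a b hab v hva hvb => (hcover b v (Ne.symm hvb)).resolve_left fun h =>
        hva (eq_of_adj_of_adj_of_not_contains_pathGraph hP h hab.symm)
    rcases h12 w u h0uw.symm x (Ne.symm hwx) (Ne.symm hux) with h1ux | h2ux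
    · rcases h12 w u h0uw.symm z (Ne.symm hwz) (Ne.symm huz) with h1uz | h2uz
      · exact .inl (.of_two_edges hy hx hu hz hyx h1uz (Ne.symm huy) hyz.ne (Ne.symm hux) hxz)
      · rcases h12 u w h0uw y (Ne.symm huy) (Ne.symm hwy) with h1wy | h2wy
        · exact .inl (.of_two_edges hu hx hw hy h1ux h1wy huw huy (Ne.symm hwx) hxy)
        · exact .inr (.of_two_edges hu hz hw hy h2uz h2wy huw huy (Ne.symm hwz) hzy)
    · exact .inr (.of_two_edges hy hz hu hx hyz h2ux (Ne.symm huy) hxy.symm (Ne.symm huz) hxz.symm)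
  · exact .inl (.of_two_edges hy hx hu hw hyx h1uw (Ne.symm huy) (Ne.symm hwy) (Ne.symm hux)
      (Ne.symm hwx))
  · exact .inr (.of_two_edges hy hz hu hw hyz h2uw (Ne.symm huy) (Ne.symm hwy) (Ne.symm huz)
      (Ne.symm hwz))

theorem matchingIn_or_matchingIn [DecidableEq V] (hP : ¬ Contains G₀ (pathGraph 3))
    (hcover : ∀ u v, u ≠ v → G₀.Adj u v ∨ G₁.Adj u v ∨ G₂.Adj u v) (hdisj : Disjoint G₁ G₂)
    (m n : ℕ) (S : Finset V) (hn : 2 ≤ n) (hnm : n ≤ m) (hS : 2 * m + n - 1 ≤ #S) :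
    MatchingIn G₁ n S ∨ MatchingIn G₂ m S := by
  induction m using Nat.strong_induction_on generalizing n S with
  | _ m ih =>
  by_cases h₂ : ∃ z ∈ S, ∃ w ∈ S, G₂.Adj z w
  swap
  · refine .inl (matchingIn_of_adj_or_adj hP n (fun u hu v hv huv => ?_) (by omega))
    exact (hcover u v huv).imp_right fun h => h.resolve_right fun h' => h₂ ⟨u, hu, v, hv, h'⟩
  by_cases h₁ : ∃ x ∈ S, ∃ y ∈ S, G₁.Adj x y
  swap
  · refine .inr (matchingIn_of_adj_or_adj hP m (fun u hu v hv huv => ?_) (by omega))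
    exact (hcover u v huv).imp_right fun h => h.resolve_left fun h' => h₁ ⟨u, hu, v, hv, h'⟩
  obtain ⟨x, hx, y, hy, hxy⟩ := h₁
  obtain ⟨z, hz, w, hw, hzw⟩ := h₂
  obtain ⟨q, hq, p, hp, r, hr, hqp, hqr⟩ :=
    exists_adj_adj_of_adj_of_adj hP hcover hx hy hz hw hxy hzw
  rcases lt_or_eq_of_le hnm with hlt | rfl
  · have := le_card_sdiff {q, r} S
    have := card_le_two (a := q) (b := r)
    rcases ih (m - 1) (by omega) n (S \ {q, r}) hn (by omega) (by omega) with h | h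
    · exact .inl (h.mono sdiff_subset)
    · exact .inr (Nat.sub_add_cancel (by omega : 1 ≤ m) ▸ h.insert_edge hq hr hqr)
  rcases eq_or_lt_of_le hn with rfl | hn
  · exact matchingIn_two_or_matchingIn_two_of_adj_adj hP hcover hdisj (by omega) hp hq hr hqp hqr
  have := le_card_sdiff {p, q, r} S
  have := card_le_three (a := p) (b := q) (c := r)
  rcases ih (n - 1) (by omega) (n - 1) (S \ {p, q, r}) (by omega) le_rfl (by omega) with h | h
  · refine .inl (Nat.sub_add_cancel (by omega : 1 ≤ n) ▸ (h.mono ?_).insert_edge hq hp hqp)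
    exact sdiff_subset_sdiff subset_rfl (by simp [insert_subset_iff])
  · refine .inr (Nat.sub_add_cancel (by omega : 1 ≤ n) ▸ (h.mono ?_).insert_edge hq hr hqr)
    exact sdiff_subset_sdiff subset_rfl (by simp)

end Cover

theorem card_le_of_contains_matchingGraph {G : SimpleGraph V} {k : ℕ} {A : Finset V}
    (h : Contains G (matchingGraph k)) (hA : ∀ u v, G.Adj u v → u ∈ A ∨ v ∈ A) : k ≤ #A := by
  obtain ⟨f, hf⟩ := h
  have hfA : ∀ j, ∃ t, f (j, t) ∈ A := fun j =>
    (hA _ _ (f.map_adj (matchingGraph_adj_zero_one j))).elim (⟨0, ·⟩) (⟨1, ·⟩)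
  choose t ht using hfA
  simpa using card_le_card_of_injOn (fun j => f (j, t j)) (s := univ) (fun j _ => ht j)
    fun j _ j' _ hjj' => congrArg Prod.fst (hf hjj')

theorem two_mul_le_of_contains_matchingGraph {G : SimpleGraph V} {k : ℕ} {B : Finset V}
    (h : Contains G (matchingGraph k)) (hB : ∀ u v, G.Adj u v → u ∈ B) : 2 * k ≤ #B := by
  obtain ⟨f, hf⟩ := h
  have hfB : ∀ p, f p ∈ B := by
    rintro ⟨j, t⟩
    have hadj := f.map_adj (matchingGraph_adj_zero_one j)
    fin_cases t
    · exact hB _ _ hadj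
    · exact hB _ _ hadj.symm
  have := card_le_card_of_injOn f (s := univ) (fun p _ => hfB p) hf.injOn
  simpa [mul_comm] using this

theorem colorClass_adj {N k : ℕ} {c : Sym2 (Fin N) → Fin k} {i : Fin k} {u v : Fin N} :
    (colorClass c i).Adj u v ↔ u ≠ v ∧ c s(u, v) = i := by
  simp [colorClass, Sym2.eq_swap]

theorem colorClass_adj_cases {N : ℕ} (c : Sym2 (Fin N) → Fin 3) {u v : Fin N} (huv : u ≠ v) :
    (colorClass c 0).Adj u v ∨ (colorClass c 1).Adj u v ∨ (colorClass c 2).Adj u v := by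
  simp only [colorClass_adj, huv, ne_eq, not_false_eq_true, true_and]
  generalize c s(u, v) = i
  fin_cases i <;> simp

theorem disjoint_colorClass {N k : ℕ} (c : Sym2 (Fin N) → Fin k) {i j : Fin k} (hij : i ≠ j) :
    Disjoint (colorClass c i) (colorClass c j) := by
  rw [← disjoint_edgeSet, Set.disjoint_left, Sym2.forall]
  intro u v hi hj
  exact hij ((colorClass_adj.1 hi).2.symm.trans (colorClass_adj.1 hj).2)

def splitColoring [DecidableEq V] (A : Finset V) : Sym2 V → Fin 3 :=
  Sym2.lift ⟨fun u v => if u ∈ A ∨ v ∈ A then 1 else 2, fun u v => by simp only [or_comm]⟩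

theorem splitColoring_mk [DecidableEq V] (A : Finset V) (u v : V) :
    splitColoring A s(u, v) = if u ∈ A ∨ v ∈ A then 1 else 2 :=
  rfl

theorem not_ramseyProp3_of_lt {N n m : ℕ} (hn : 1 ≤ n) (hm : 1 ≤ m) (hN : N < 2 * m + n - 1) :
    ¬ ramseyProp3 N (pathGraph 3) (matchingGraph n) (matchingGraph m) := by
  obtain ⟨A, -, hA⟩ := exists_subset_card_eq (s := (univ : Finset (Fin N))) (n := min (n - 1) N)
    (by simp)
  intro h
  rcases h (splitColoring A) with ⟨f, -⟩ | h₁ | h₂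
  · have h0 := (colorClass_adj.1 (f.map_adj (pathGraph_adj.2 (.inl rfl) :
      (pathGraph 3).Adj 0 1))).2
    rw [splitColoring_mk] at h0
    split_ifs at h0 <;> simp at h0
  · have := card_le_of_contains_matchingGraph h₁ (A := A) fun u v huv => by
      have h1 := (colorClass_adj.1 huv).2
      rw [splitColoring_mk] at h1
      split_ifs at h1 with hA
      exacts [hA, absurd h1 (by decide)]
    omega
  · have := two_mul_le_of_contains_matchingGraph h₂ (B := Aᶜ) fun u v huv => by
      have h2 := (colorClass_adj.1 huv).2
      rw [splitColoring_mk] at h2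
      split_ifs at h2 with hA
      · exact absurd h2 (by decide)
      · exact mem_compl.2 fun hu => hA (.inl hu)
    rw [card_compl, hA, Fintype.card_fin] at this
    omega

theorem ramsey_P3_nK2_mK2 (n m : ℕ) (hn : 3 ≤ n) (hnm : n ≤ m) :
    IsLeast {N | ramseyProp3 N (SimpleGraph.pathGraph 3) (matchingGraph n)
      (matchingGraph m)} (2 * m + n - 1) := by
  refine ⟨fun c => ?_, fun N hN => ?_⟩
  · by_cases hP : Contains (colorClass c 0) (pathGraph 3)
    · exact .inl hP
    refine .inr ((matchingIn_or_matchingIn hP (fun u v => colorClass_adj_cases c)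
      (disjoint_colorClass c (by decide)) m n univ (by omega) hnm (by simp)).imp
        MatchingIn.contains MatchingIn.contains)
  · by_contra! hlt
    exact not_ramseyProp3_of_lt (by omega) (by omega) hlt hN
end
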